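/- arXiv:1401.3456 — 2 statements merged into one kernel-verified Lean document; each statement's English description precedes it below -/
import Mathlib

section
/- Let σ > 0 and V ∈ ℝ. Then ∫_0^∞ ∫_{−∞}^{V − x/Δt} (v − V)²·exp(−v²/(2σ²)) dv dx, divided by Δt·σ·√(2π), equals (1/2)·[V·(3σ² + V²)·erfc(−V/(σ√2)) + (2σ² + V²)·σ·√(2/π)·exp(−V²/(2σ²))]. -/
/-!
Integrating over `x` first (Fubini), the slice `{x > 0 : v < V - x/Δt}` has length `Δt (V - v)⁺`,
so the double integral is `Δt ∫_{v < V} (V - v)³ exp(-b v²) dv` with `b = 1/(2σ²)`. For a quadratic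
`p`, `(V - v)³ = V³ + 3V/(2b) + (p' - 2b v p)(v)`, and the last term times the Gaussian is the
derivative of `p(v) exp(-b v²)`, which vanishes at `-∞`. What remains is the Gaussian tail
`∫_{v < V} exp(-b v²)`, which is `erfc` after the substitution `v = -s/√b`.
-/

open MeasureTheory Real

/-- The complementary error function `erfc(z) = (2/√π) ∫_z^∞ exp(-s²) ds`. -/
noncomputable def erfc (z : ℝ) : ℝ :=
  (2 / Real.sqrt Real.pi) * ∫ s in Set.Ioi z, Real.exp (-s ^ 2)

open Set Filter Topology Polynomial

section Gaussian

variable {b : ℝ}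

theorem integrable_eval_mul_exp_neg_mul_sq (hb : 0 < b) (p : ℝ[X]) :
    Integrable fun x : ℝ => p.eval x * exp (-b * x ^ 2) := by
  induction p using Polynomial.induction_on' with
  | add p q hp hq =>
    simp only [eval_add, add_mul]
    exact hp.add hq
  | monomial n a =>
    have := integrable_rpow_mul_exp_neg_mul_sq hb (s := n) (neg_one_lt_zero.trans_le n.cast_nonneg)
    simpa only [eval_monomial, rpow_natCast, mul_assoc] using this.const_mul a

theorem hasDerivAt_eval_mul_exp_neg_mul_sq (p : ℝ[X]) (x : ℝ) :
    HasDerivAt (fun x : ℝ => p.eval x * exp (-b * x ^ 2))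
      ((derivative p - C (2 * b) * X * p).eval x * exp (-b * x ^ 2)) x := by
  refine ((p.hasDerivAt x).mul ((hasDerivAt_pow 2 x).const_mul (-b)).exp).congr_deriv ?_
  simp only [eval_sub, eval_mul, eval_C, eval_X]
  ring

theorem tendsto_eval_mul_exp_neg_mul_sq_atBot (hb : 0 < b) (p : ℝ[X]) :
    Tendsto (fun x : ℝ => p.eval x * exp (-b * x ^ 2)) atBot (𝓝 0) :=
  tendsto_zero_of_hasDerivAt_of_integrableOn_Iic (a := 0)
    (fun x _ => hasDerivAt_eval_mul_exp_neg_mul_sq p x)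
    (integrable_eval_mul_exp_neg_mul_sq hb _).integrableOn
    (integrable_eval_mul_exp_neg_mul_sq hb p).integrableOn

theorem integral_Iic_eval_mul_exp_neg_mul_sq (hb : 0 < b) (p : ℝ[X]) (a : ℝ) :
    ∫ x in Iic a, (derivative p - C (2 * b) * X * p).eval x * exp (-b * x ^ 2) =
      p.eval a * exp (-b * a ^ 2) := by
  simpa using integral_Iic_of_hasDerivAt_of_tendsto'
    (fun x _ => hasDerivAt_eval_mul_exp_neg_mul_sq p x)
    (integrable_eval_mul_exp_neg_mul_sq hb _).integrableOn
    (tendsto_eval_mul_exp_neg_mul_sq_atBot hb p)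

theorem integrable_sub_pow_mul_exp_neg_mul_sq (hb : 0 < b) (a : ℝ) (n : ℕ) :
    Integrable fun x : ℝ => (a - x) ^ n * exp (-b * x ^ 2) := by
  have := integrable_eval_mul_exp_neg_mul_sq hb ((C a - X) ^ n)
  simp only [eval_pow, eval_sub, eval_C, eval_X] at this
  exact this

theorem integral_Iic_exp_neg_mul_sq (hb : 0 < b) (a : ℝ) :
    ∫ x in Iic a, exp (-b * x ^ 2) = √π / (2 * √b) * erfc (-a * √b) := by
  have hsb : 0 < √b := sqrt_pos.2 hb
  have hsub := integral_comp_mul_left_Ioi (fun y => exp (-y ^ 2)) (-a) hsb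
  simp only [mul_pow, sq_sqrt hb.le] at hsub
  have hrefl : ∫ x in Iic a, exp (-b * x ^ 2) = ∫ x in Ioi (-a), exp (-b * x ^ 2) := by
    conv_lhs => rw [← neg_neg a, ← integral_comp_neg_Ioi]
    simp only [neg_sq]
  rw [hrefl, erfc]
  simp_rw [neg_mul b, hsub, smul_eq_mul, mul_neg, neg_mul, mul_comm √b]
  field_simp

theorem integral_Iio_sub_pow_three_mul_exp_neg_mul_sq (hb : 0 < b) (a : ℝ) :
    ∫ x in Iio a, (a - x) ^ 3 * exp (-b * x ^ 2) =
      (a ^ 3 + 3 * a / (2 * b)) * (∫ x in Iic a, exp (-b * x ^ 2)) +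
        (a ^ 2 + 1 / b) / (2 * b) * exp (-b * a ^ 2) := by
  set p : ℝ[X] := C (1 / (2 * b)) * (X ^ 2 - C (3 * a) * X + C (3 * a ^ 2 + 1 / b))
  have hsplit : ∀ x, (a - x) ^ 3 * exp (-b * x ^ 2) = (a ^ 3 + 3 * a / (2 * b)) *
      exp (-b * x ^ 2) + (derivative p - C (2 * b) * X * p).eval x * exp (-b * x ^ 2) := by
    intro x
    simp only [p, derivative_mul, derivative_C, derivative_sub, derivative_add, derivative_X_pow,
      derivative_X, eval_add, eval_sub, eval_mul, eval_C, eval_X, eval_pow, eval_zero, eval_one]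
    field_simp
    ring
  rw [← integral_Iic_eq_integral_Iio]
  simp_rw [hsplit]
  rw [integral_add ((integrable_exp_neg_mul_sq hb).const_mul _).integrableOn
      (integrable_eval_mul_exp_neg_mul_sq hb _).integrableOn, integral_const_mul,
    integral_Iic_eval_mul_exp_neg_mul_sq hb]
  congr 2
  simp only [p, eval_add, eval_sub, eval_mul, eval_C, eval_X, eval_pow]
  field_simp
  ring

end Gaussian

theorem integral_Ioi_zero_indicator_Iio_const (t y : ℝ) :
    ∫ x in Ioi 0, (Iio t).indicator (fun _ => y) x = max t 0 * y := by
  rw [setIntegral_indicator measurableSet_Iio, Ioi_inter_Iio, setIntegral_const, volume_real_Ioo,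
    sub_zero, smul_eq_mul]

theorem max_mul_sub_zero_mul_eq_mul_indicator {c : ℝ} (hc : 0 < c) (a : ℝ) (h : ℝ → ℝ) (v : ℝ) :
    max (c * (a - v)) 0 * h v = c * (Iio a).indicator (fun v => (a - v) * h v) v := by
  by_cases hv : v < a
  · rw [indicator_of_mem (mem_Iio.2 hv), max_eq_left (by nlinarith)]
    ring
  · rw [indicator_of_notMem (notMem_Iio.2 (not_lt.1 hv)), max_eq_right (by nlinarith), zero_mul,
      mul_zero]

theorem integral_Ioi_integral_Iio_sub_div {g : ℝ → ℝ} {a c : ℝ} (hc : 0 < c) (hg : Measurable g)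
    (hgi : IntegrableOn (fun v => (a - v) * g v) (Iio a)) :
    ∫ x in Ioi 0, ∫ v in Iio (a - x / c), g v = c * ∫ v in Iio a, (a - v) * g v := by
  set S : Set (ℝ × ℝ) := {p | p.1 < c * (a - p.2)}
  set F : ℝ → ℝ → ℝ := fun x v => S.indicator (fun p => g p.2) (x, v)
  have hF_v : ∀ x v, F x v = (Iio (a - x / c)).indicator g v := fun x v => by
    have : v < a - x / c ↔ x < c * (a - v) := by
      rw [lt_sub_comm, div_lt_iff₀' hc]
    simp only [F, S, indicator_apply, mem_ofPred_eq, mem_Iio, this]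
  have hF_x : ∀ x v, F x v = (Iio (c * (a - v))).indicator (fun _ => g v) x := fun x v => by
    simp only [F, S, indicator_apply, mem_ofPred_eq, mem_Iio]
  have hS : MeasurableSet S := measurableSet_lt measurable_fst (by fun_prop)
  have hnorm : ∀ x v, ‖F x v‖ = (Iio (c * (a - v))).indicator (fun _ => ‖g v‖) x := fun x v => by
    rw [hF_x]
    exact norm_indicator_eq_indicator_norm (f := fun _ => g v) x
  have hint : Integrable (Function.uncurry F) ((volume.restrict (Ioi 0)).prod volume) := by
    refine (integrable_prod_iff' ?_).2 ⟨Eventually.of_forall fun v => ?_, ?_⟩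
    · exact ((hg.comp measurable_snd).indicator hS).aestronglyMeasurable
    · simp only [Function.uncurry_apply_pair, hF_x]
      exact (integrable_indicator_iff measurableSet_Iio).2
        (integrableOn_const (by
          rw [Measure.restrict_apply measurableSet_Iio, Iio_inter_Ioi]
          exact measure_Ioo_lt_top.ne))
    · simp only [Function.uncurry_apply_pair, hnorm, integral_Ioi_zero_indicator_Iio_const,
        max_mul_sub_zero_mul_eq_mul_indicator hc a fun v => ‖g v‖]
      refine ((integrable_indicator_iff measurableSet_Iio).2 ?_).const_mul c
      refine IntegrableOn.congr_fun hgi.norm (fun v hv => ?_) measurableSet_Iio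
      rw [norm_mul, Real.norm_of_nonneg (sub_nonneg.2 (le_of_lt hv))]
  calc ∫ x in Ioi 0, ∫ v in Iio (a - x / c), g v
      = ∫ x in Ioi 0, ∫ v, F x v := by simp only [hF_v, integral_indicator measurableSet_Iio]
    _ = ∫ v, ∫ x in Ioi 0, F x v := integral_integral_swap hint
    _ = ∫ v, c * (Iio a).indicator (fun v => (a - v) * g v) v := by
      simp only [hF_x, integral_Ioi_zero_indicator_Iio_const,
        max_mul_sub_zero_mul_eq_mul_indicator hc a g]
    _ = c * ∫ v in Iio a, (a - v) * g v := by
      rw [integral_const_mul, integral_indicator measurableSet_Iio]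

theorem stmt_8 (σ V Δt : ℝ) (hσ : 0 < σ) (hΔt : 0 < Δt) :
    (∫ x in Set.Ioi (0 : ℝ), ∫ v in Set.Iio (V - x / Δt),
        (v - V) ^ 2 * Real.exp (-v ^ 2 / (2 * σ ^ 2))) / (Δt * σ * Real.sqrt (2 * Real.pi)) =
      (1 / 2) * (V * (3 * σ ^ 2 + V ^ 2) * erfc (-V / (σ * Real.sqrt 2)) +
        (2 * σ ^ 2 + V ^ 2) * σ * Real.sqrt (2 / Real.pi) * Real.exp (-V ^ 2 / (2 * σ ^ 2))) := by
  set b := (2 * σ ^ 2)⁻¹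
  have hb : 0 < b := by positivity
  have hexp : ∀ v, exp (-v ^ 2 / (2 * σ ^ 2)) = exp (-b * v ^ 2) := fun v => by
    rw [neg_div, div_eq_inv_mul, neg_mul]
  have hcube : ∀ v, (V - v) * ((v - V) ^ 2 * exp (-b * v ^ 2)) = (V - v) ^ 3 * exp (-b * v ^ 2) :=
    fun v => by ring
  have hsqrt_b : √b = (σ * √2)⁻¹ := by
    rw [sqrt_inv, sqrt_mul' _ (sq_nonneg σ), sqrt_sq hσ.le, mul_comm]
  simp only [hexp]
  rw [integral_Ioi_integral_Iio_sub_div hΔt (by fun_prop)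
      (by simpa only [hcube] using (integrable_sub_pow_mul_exp_neg_mul_sq hb V 3).integrableOn),
    funext hcube, integral_Iio_sub_pow_three_mul_exp_neg_mul_sq hb, integral_Iic_exp_neg_mul_sq hb,
    hsqrt_b, sqrt_mul zero_le_two, sqrt_div zero_le_two]
  have hs2 : √2 ^ 2 = 2 := sq_sqrt zero_le_two
  have hπ : 0 < √π := sqrt_pos.2 pi_pos
  simp only [b]
  field_simp
  ring_nf
  simp only [hs2]
  ring
end

section
/- Let V ∈ ℝ, γ > 0, D > 0, and let (σ_μ)_{μ>0} with σ_μ = √((μ+1)Dγ). Then the drift expansion holds: −(λ_μ/(μ+1))·[(σ_μ²+V²)·erfc(−V/(σ_μ√2)) + V σ_μ √(2/π)·e^{−V²/(2σ_μ²)}] = −γ√(π(μ+1)Dγ)/(4√2) − (γ/2)V − (√(πγ)/(4√(2D(μ+1))))V² + O(μ^{−1}) as μ → ∞, with λ_μ = (1/4)√(π(μ+1)γ/(2D)). -/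
/-!
With `w = V / (σ √2)` the drift is `-(√π γ σ / (4√2)) · P(w)` for the profile
`P(w) = (1 + 2w²) erfc(-w) + (2/√π) w e^{-w²}`. From `erfc(-w) = 1 + (2/√π) w + O(w³)` and
`e^{-w²} = 1 + O(w²)` one gets `P(w) = 1 + (4/√π) w + 2w² + O(w³)`; the first three terms give
the expansion, and the remainder is `σ · O(σ⁻³) = O(σ⁻²) = O(μ⁻¹)` since `σ² = (μ+1) D γ`.
-/

open MeasureTheory Real Filter Asymptotics

open Topology

theorem erfc_eq_one_sub_integral (z : ℝ) :
    erfc z = 1 - 2 / √π * ∫ s in (0 : ℝ)..z, exp (-s ^ 2) := by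
  have hint : Integrable fun s : ℝ => exp (-s ^ 2) := by
    simpa using integrable_exp_neg_mul_sq one_pos
  have hhalf : ∫ s in Set.Ioi (0 : ℝ), exp (-s ^ 2) = √π / 2 := by
    simpa using integral_gaussian_Ioi 1
  rw [erfc, ← intervalIntegral.integral_Ioi_sub_Ioi' hint.integrableOn hint.integrableOn, hhalf]
  field_simp
  ring

theorem abs_exp_neg_sq_sub_one_le (s : ℝ) : |exp (-s ^ 2) - 1| ≤ s ^ 2 := by
  have hle : exp (-s ^ 2) ≤ 1 := exp_le_one_iff.2 (neg_nonpos.2 (sq_nonneg s))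
  have hge := add_one_le_exp (-s ^ 2)
  rw [abs_le]
  constructor <;> linarith

theorem abs_erfc_sub_le (z : ℝ) : |erfc z - (1 - 2 / √π * z)| ≤ 2 / √π * |z| ^ 3 := by
  have hsplit : ∫ s in (0 : ℝ)..z, (exp (-s ^ 2) - 1) = (∫ s in (0 : ℝ)..z, exp (-s ^ 2)) - z := by
    rw [intervalIntegral.integral_sub
      ((by fun_prop : Continuous fun s : ℝ => exp (-s ^ 2)).intervalIntegrable 0 z)
      intervalIntegrable_const]
    simp
  have hdev : ‖∫ s in (0 : ℝ)..z, (exp (-s ^ 2) - 1)‖ ≤ z ^ 2 * |z - 0| := by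
    refine intervalIntegral.norm_integral_le_of_norm_le_const fun s hs => ?_
    refine (abs_exp_neg_sq_sub_one_le s).trans ?_
    rcases Set.mem_uIoc.1 hs with ⟨h₁, h₂⟩ | ⟨h₁, h₂⟩ <;> nlinarith
  rw [erfc_eq_one_sub_integral, sub_sub_sub_cancel_left, ← mul_sub, abs_mul, abs_sub_comm,
    ← hsplit, abs_of_pos (by positivity : (0 : ℝ) < 2 / √π)]
  gcongr
  rwa [norm_eq_abs, sub_zero, ← sq_abs, ← pow_succ] at hdev

noncomputable def driftProfile (w : ℝ) : ℝ :=
  (1 + 2 * w ^ 2) * erfc (-w) + 2 / √π * w * exp (-w ^ 2)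

theorem driftProfile_sub_isBigO :
    (fun w => driftProfile w - (1 + 4 / √π * w + 2 * w ^ 2)) =O[𝓝 0] fun w => w ^ 3 := by
  have herfc : (fun w => erfc (-w) - (1 + 2 / √π * w)) =O[𝓝 0] fun w => w ^ 3 :=
    .of_bound (2 / √π) <| .of_forall fun w => by
      simpa [abs_neg] using abs_erfc_sub_le (-w)
  have hexp : (fun w => w * (exp (-w ^ 2) - 1)) =O[𝓝 0] fun w => w ^ 3 :=
    .of_bound 1 <| .of_forall fun w => calc
      ‖w * (exp (-w ^ 2) - 1)‖ ≤ |w| * w ^ 2 := by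
        rw [norm_mul, norm_eq_abs, norm_eq_abs]
        exact mul_le_mul_of_nonneg_left (abs_exp_neg_sq_sub_one_le w) (abs_nonneg w)
      _ = 1 * ‖w ^ 3‖ := by rw [norm_eq_abs, abs_pow, ← sq_abs]; ring
  have hbounded : (fun w : ℝ => 1 + 2 * w ^ 2) =O[𝓝 0] fun _ => (1 : ℝ) :=
    (by fun_prop : Continuous fun w : ℝ => 1 + 2 * w ^ 2).continuousAt.isBigO_one ℝ
  have hprod : (fun w => (1 + 2 * w ^ 2) * (erfc (-w) - (1 + 2 / √π * w))) =O[𝓝 0]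
      fun w => w ^ 3 := by
    simpa only [one_mul] using hbounded.mul herfc
  have hsum := (hprod.add (hexp.const_mul_left (2 / √π))).add
    ((isBigO_refl (fun w : ℝ => w ^ 3) _).const_mul_left (4 / √π))
  refine hsum.congr_left fun w => ?_
  rw [driftProfile]
  ring

/-- At `σ = σ_μ` the prefactor `√π γ / (4√2 σ)` is the paper's `λ_μ / (μ + 1)`. -/
noncomputable def drift (γ σ V : ℝ) : ℝ :=
  -(√π * γ / (4 * √2 * σ)) *
    ((σ ^ 2 + V ^ 2) * erfc (-V / (σ * √2)) + V * σ * √(2 / π) * exp (-V ^ 2 / (2 * σ ^ 2)))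

noncomputable def driftExpansion (γ σ V : ℝ) : ℝ :=
  -(γ * (√π * σ)) / (4 * √2) - γ / 2 * V - √π * γ / (4 * √2 * σ) * V ^ 2

theorem drift_sub_driftExpansion_eq (γ V : ℝ) {σ : ℝ} (hσ : σ ≠ 0) :
    drift γ σ V - driftExpansion γ σ V =
      -(√π * γ / (4 * √2)) * (σ * (driftProfile (V / (σ * √2)) -
        (1 + 4 / √π * (V / (σ * √2)) + 2 * (V / (σ * √2)) ^ 2))) := by
  have h2 : √2 ^ 2 = 2 := sq_sqrt zero_le_two
  have h3 : √2 ^ 3 = 2 * √2 := by rw [pow_succ, h2]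
  have hexp : -V ^ 2 / (2 * σ ^ 2) = -(V / (σ * √2)) ^ 2 := by
    rw [div_pow, mul_pow, h2]; ring
  rw [drift, driftExpansion, driftProfile, neg_div, hexp, sqrt_div' _ pi_pos.le]
  field_simp
  ring_nf
  rw [h2, h3]
  ring

theorem drift_sub_driftExpansion_isBigO (γ V : ℝ) :
    (fun σ => drift γ σ V - driftExpansion γ σ V) =O[atTop] fun σ => (σ ^ 2)⁻¹ := by
  have hw : Tendsto (fun σ : ℝ => V / (σ * √2)) atTop (𝓝 0) :=
    tendsto_const_nhds.div_atTop (tendsto_id.atTop_mul_const (by positivity))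
  calc (fun σ => drift γ σ V - driftExpansion γ σ V)
      =ᶠ[atTop] fun σ => -(√π * γ / (4 * √2)) * (σ * (driftProfile (V / (σ * √2)) -
        (1 + 4 / √π * (V / (σ * √2)) + 2 * (V / (σ * √2)) ^ 2))) :=
        (eventually_ne_atTop 0).mono fun σ hσ => drift_sub_driftExpansion_eq γ V hσ
    _ =O[atTop] fun σ => σ * (V / (σ * √2)) ^ 3 :=
        ((isBigO_refl _ _).mul (driftProfile_sub_isBigO.comp_tendsto hw)).const_mul_left _
    _ =ᶠ[atTop] fun σ => V ^ 3 / √2 ^ 3 * (σ ^ 2)⁻¹ :=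
        (eventually_ne_atTop 0).mono fun σ hσ => by field_simp
    _ =O[atTop] fun σ => (σ ^ 2)⁻¹ := isBigO_const_mul_self _ _ _

theorem quarter_sqrt_div_eq {γ D m : ℝ} (hγ : 0 < γ) (hD : 0 < D) (hm : 0 < m) :
    1 / 4 * √(π * m * γ / (2 * D)) / m = √π * γ / (4 * √2 * √(m * D * γ)) := by
  have hσ2 : √(m * D * γ) ^ 2 = m * D * γ := sq_sqrt (by positivity)
  have hsqrt : √(π * m * γ / (2 * D)) = √π * γ * m / (√2 * √(m * D * γ)) := by
    rw [sqrt_eq_iff_eq_sq (by positivity) (by positivity), div_pow, mul_pow, mul_pow,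
      mul_pow, sq_sqrt pi_pos.le, sq_sqrt zero_le_two, hσ2]
    field_simp
  rw [hsqrt]
  field_simp

theorem sqrt_div_four_sqrt_eq {γ D m : ℝ} (hγ : 0 < γ) (hD : 0 < D) (hm : 0 < m) :
    √(π * γ) / (4 * √(2 * D * m)) = √π * γ / (4 * √2 * √(m * D * γ)) := by
  have hsqrt : √(2 * D * m) = √2 * √(m * D * γ) / √γ := by
    rw [sqrt_eq_iff_eq_sq (by positivity) (by positivity), div_pow, mul_pow,
      sq_sqrt zero_le_two, sq_sqrt hγ.le, sq_sqrt (by positivity)]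
    field_simp
  rw [hsqrt, sqrt_mul pi_pos.le]
  field_simp
  rw [sq_sqrt hγ.le]

/-- Taylor expansion of the exact drift coefficient `α(V)` of the 1D MD model [A]:
with `λ_μ = (1/4)√(π(μ+1)γ/(2D))` and `σ_μ = √((μ+1)Dγ)`,
`α(V) = -γ√(π(μ+1)Dγ)/(4√2) - (γ/2)V - (√(πγ)/(4√(2D(μ+1))))V² + O(μ⁻¹)`
as `μ → ∞`. -/
theorem stmt_13 (V γ D : ℝ) (hγ : 0 < γ) (hD : 0 < D) :
    (fun μ : ℝ =>
        (-(((1 / 4) * Real.sqrt (Real.pi * (μ + 1) * γ / (2 * D))) / (μ + 1)) *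
            ((Real.sqrt ((μ + 1) * D * γ) ^ 2 + V ^ 2) *
                erfc (-V / (Real.sqrt ((μ + 1) * D * γ) * Real.sqrt 2)) +
              V * Real.sqrt ((μ + 1) * D * γ) * Real.sqrt (2 / Real.pi) *
                Real.exp (-V ^ 2 / (2 * Real.sqrt ((μ + 1) * D * γ) ^ 2)))) -
          (-(γ * Real.sqrt (Real.pi * (μ + 1) * D * γ)) / (4 * Real.sqrt 2) -
            (γ / 2) * V -
            (Real.sqrt (Real.pi * γ) / (4 * Real.sqrt (2 * D * (μ + 1)))) * V ^ 2)) =O[atTop]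
      fun μ : ℝ => μ⁻¹ := by
  set σ : ℝ → ℝ := fun μ => √((μ + 1) * D * γ)
  have hσ : Tendsto σ atTop atTop := tendsto_sqrt_atTop.comp <|
    ((tendsto_atTop_add_const_right _ 1 tendsto_id).atTop_mul_const hD).atTop_mul_const hγ
  calc _ =ᶠ[atTop] fun μ => drift γ (σ μ) V - driftExpansion γ (σ μ) V := by
        filter_upwards [eventually_gt_atTop (-1)] with μ hμ
        have hμ1 : 0 < μ + 1 := by linarith
        have hπσ : √(π * (μ + 1) * D * γ) = √π * σ μ := by
          rw [← sqrt_mul pi_pos.le]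
          ring_nf
        rw [quarter_sqrt_div_eq hγ hD hμ1, sqrt_div_four_sqrt_eq hγ hD hμ1, hπσ]
        rfl
    _ =O[atTop] fun μ => (σ μ ^ 2)⁻¹ := (drift_sub_driftExpansion_isBigO γ V).comp_tendsto hσ
    _ =O[atTop] fun μ => μ⁻¹ := by
        refine .of_bound (D * γ)⁻¹ ?_
        filter_upwards [eventually_gt_atTop 0] with μ hμ
        rw [sq_sqrt (by positivity), norm_inv, norm_inv, norm_eq_abs, norm_eq_abs, abs_of_pos hμ,
          abs_of_pos (by positivity), ← mul_inv]
        exact inv_anti₀ (by positivity) (by nlinarith [mul_pos hD hγ])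
end
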